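/- For every integer k ≥ 1, every weak order W extending the interval order I_k satisfies H(W) − H(I_k) ≥ log₂ k − log₂ e − 1, where e is the base of natural logarithms. -/

import Mathlib

/-- A stable (independent) set of a simple graph, as a `Finset` of vertices. -/
def IsStableSet {V : Type*} (G : SimpleGraph V) (S : Finset V) : Prop :=
  ∀ v ∈ S, ∀ w ∈ S, ¬ G.Adj v w

/-- The stable set polytope `STAB(G)`: the convex hull of characteristic vectors
of stable sets of `G`. -/
noncomputable def STAB {V : Type*} [Fintype V] [DecidableEq V] (G : SimpleGraph V) :
    Set (V → ℝ) :=
  convexHull ℝ {x | ∃ S : Finset V, IsStableSet G S ∧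
    x = fun v => if v ∈ S then (1 : ℝ) else 0}

/-- The (Körner) entropy of a graph `G` on `n` vertices:
`H(G) = min_{x ∈ STAB(G), x > 0} -(1/n) ∑_v log₂ x_v`. -/
noncomputable def graphEntropy {V : Type*} [Fintype V] [DecidableEq V]
    (G : SimpleGraph V) : ℝ :=
  sInf {h : ℝ | ∃ x ∈ STAB G, (∀ v, 0 < x v) ∧
    h = -(1 / (Fintype.card V : ℝ)) * ∑ v, Real.logb 2 (x v)}

/-- The comparability graph of a partial order `P`: distinct `v, w` are adjacent
iff they are comparable in `P`. -/
def compGraph {V : Type*} (P : PartialOrder V) : SimpleGraph V where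
  Adj v w := v ≠ w ∧ (P.le v w ∨ P.le w v)
  symm := ⟨fun v w h => ⟨h.1.symm, h.2.symm⟩⟩
  loopless := ⟨fun v h => h.1 rfl⟩

/-- The entropy of a poset: the entropy of its comparability graph. -/
noncomputable def posetEntropy {V : Type*} [Fintype V] [DecidableEq V]
    (P : PartialOrder V) : ℝ :=
  graphEntropy (compGraph P)

/-- The number `e(P)` of linear extensions of a finite poset `P`, counted as
order-preserving bijections onto `Fin n`. -/
noncomputable def numLinExt {V : Type*} [Fintype V] (P : PartialOrder V) : ℕ :=
  Nat.card {f : V ≃ Fin (Fintype.card V) // ∀ v w : V, P.le v w → f v ≤ f w}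

/-- `W` is a weak order: its ground set is partitioned into layers
`A 0, …, A (k-1)` (necessarily antichains), and `v <_W w` holds exactly when
`v` lies in an earlier layer than `w`. -/
def IsWeakOrder {V : Type*} (W : PartialOrder V) : Prop :=
  ∃ (k : ℕ) (A : Fin k → Finset V),
    (∀ v : V, ∃! i, v ∈ A i) ∧
    (∀ v w : V, W.lt v w ↔ ∃ i j : Fin k, i < j ∧ v ∈ A i ∧ w ∈ A j)

/-- `Q` extends `P`: same ground set, and every relation of `P` holds in `Q`. -/
def Extends {V : Type*} (Q P : PartialOrder V) : Prop :=
  ∀ v w : V, P.le v w → Q.le v w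


/-- The ground set of the interval order `I_{k+1}`: it has `(k+1)·2^k` elements,
and `IkType (k+1)` is built as `L ⊕ A_L ⊕ A_R ⊕ R` where `L, R` are copies of
`IkType k` and `A_L, A_R` are the two halves of the central antichain. -/
def IkType : ℕ → Type
  | 0 => PUnit
  | k + 1 => IkType k ⊕ Fin (2 ^ k) ⊕ Fin (2 ^ k) ⊕ IkType k

instance ikDecEq : ∀ k, DecidableEq (IkType k)
  | 0 => inferInstanceAs (DecidableEq PUnit)
  | k + 1 =>
    letI := ikDecEq k
    inferInstanceAs (DecidableEq (IkType k ⊕ Fin (2 ^ k) ⊕ Fin (2 ^ k) ⊕ IkType k))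

instance ikFintype : ∀ k, Fintype (IkType k)
  | 0 => inferInstanceAs (Fintype PUnit)
  | k + 1 =>
    letI := ikFintype k
    inferInstanceAs (Fintype (IkType k ⊕ Fin (2 ^ k) ⊕ Fin (2 ^ k) ⊕ IkType k))

/-- The strict order relation of `I_{k+1}` on `IkType k`: relations inside the
left copy `L` and the right copy `R` are inherited recursively; every element of
`L ∪ A_L` is below every element of `R`; every element of `L` is below every
element of `A_R ∪ R`; and nothing else. -/
def IkLT : (k : ℕ) → IkType k → IkType k → Prop
  | 0, _, _ => False
  | k + 1, x, y =>
    match x, y with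
    | Sum.inl a, Sum.inl b => IkLT k a b
    | Sum.inl _, Sum.inr (Sum.inr _) => True
    | Sum.inr (Sum.inl _), Sum.inr (Sum.inr (Sum.inr _)) => True
    | Sum.inr (Sum.inr (Sum.inr a)), Sum.inr (Sum.inr (Sum.inr b)) => IkLT k a b
    | _, _ => False

theorem ikLT_irrefl : ∀ (k : ℕ) (x : IkType k), ¬ IkLT k x x := by
  intro k
  induction k with
  | zero => intro x h; exact h
  | succ k ih =>
    intro x
    rcases x with a | (a | (a | a)) <;> simp [IkLT] <;> exact ih a

theorem ikLT_trans :
    ∀ (k : ℕ) (x y z : IkType k), IkLT k x y → IkLT k y z → IkLT k x z := by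
  intro k
  induction k with
  | zero => intro x y z h1 _; exact h1.elim
  | succ k ih =>
    intro x y z h1 h2
    rcases x with a | (a | (a | a)) <;> rcases y with b | (b | (b | b)) <;>
      rcases z with c | (c | (c | c)) <;> simp_all [IkLT]
    · exact ih a b c h1 h2
    · exact ih a b c h1 h2

/-- The interval order `I_{k+1}` (on `(k+1)·2^k` elements). -/
def IkOrder (k : ℕ) : PartialOrder (IkType k) where
  le x y := IkLT k x y ∨ x = y
  le_refl x := Or.inr rfl
  le_trans x y z h1 h2 := by
    rcases h1 with h1 | rfl
    · rcases h2 with h2 | rfl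
      · exact Or.inl (ikLT_trans k x y z h1 h2)
      · exact Or.inl h1
    · exact h2
  le_antisymm x y h1 h2 := by
    rcases h1 with h1 | rfl
    · rcases h2 with h2 | rfl
      · exact absurd (ikLT_trans k x y x h1 h2) (ikLT_irrefl k x)
      · rfl
    · rfl

/-!
Write `n = (k + 1) 2^k` for the size of `I_{k+1}`. The point `x_v = 2^{-d(v)}`, where `d(v)` is the
recursion depth at which `v` enters a central antichain, lies in `STAB(I_{k+1})`: it is the average
of its two lifts to `L ∪ A_L` and `A_R ∪ R`. Its entropy gives `H(I_{k+1}) ≤ k/2 + 1`.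

A weak order `W` with layers `A_i` contains the complete multipartite graph on these layers, so
every stable set lies in one layer and `∑_v x_v / |A(v)| ≤ 1` on `STAB(W)`; by Gibbs' inequality
`H(W) ≥ log n - (1/n) ∑_i |A_i| log |A_i|`. Each layer is an antichain of `I_{k+1}`, and every
antichain `S` satisfies `|S| log |S| ≤ ∑_{v ∈ S} ℓ(v) + |S| log e`, with `ℓ(v)` the level of the
central antichain containing `v`. As `∑_v ℓ(v) = k n / 2` and `log n = log (k + 1) + k`, this gives
`H(W) ≥ log (k + 1) + k/2 - log e`.
-/

open Finset Real

section StablePolytope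

variable {V : Type*} [Fintype V] [DecidableEq V] {G : SimpleGraph V}

theorem sum_mul_le_one_of_mem_STAB {w : V → ℝ}
    (hw : ∀ S, IsStableSet G S → ∑ v ∈ S, w v ≤ 1) {x : V → ℝ} (hx : x ∈ STAB G) :
    ∑ v, w v * x v ≤ 1 := by
  refine convexHull_min (t := {y | ∑ v, w v * y v ≤ 1}) ?_ (convex_halfSpace_le ?_ 1) hx
  · rintro _ ⟨S, hS, rfl⟩
    simpa [mul_ite] using hw S hS
  · refine ⟨fun y z => ?_, fun c y => ?_⟩
    · simp only [Pi.add_apply, mul_add, sum_add_distrib]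
    · simp only [Pi.smul_apply, smul_eq_mul, mul_sum]
      exact sum_congr rfl fun _ _ => by ring

theorem le_one_of_mem_STAB {x : V → ℝ} (hx : x ∈ STAB G) (v : V) : x v ≤ 1 := by
  have := sum_mul_le_one_of_mem_STAB (w := fun u => if u = v then 1 else 0)
    (fun S _ => by rw [sum_ite_eq']; split_ifs <;> norm_num) hx
  simpa using this

theorem const_mem_STAB [Nonempty V] (G : SimpleGraph V) :
    (fun _ => (Fintype.card V : ℝ)⁻¹) ∈ STAB G := by
  have hsingle : ∀ v, (fun u => if u ∈ ({v} : Finset V) then (1 : ℝ) else 0) ∈ STAB G :=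
    fun v => subset_convexHull ℝ _ ⟨{v}, fun a ha b hb => by
      rw [mem_singleton] at ha hb; subst ha hb; exact G.irrefl, rfl⟩
  have hconv : Convex ℝ (STAB G) := convex_convexHull ℝ _
  convert hconv.sum_mem (t := univ) (w := fun _ => (Fintype.card V : ℝ)⁻¹)
    (fun _ _ => by positivity) (by simp) (fun v _ => hsingle v) using 1
  ext u
  simp [Finset.sum_apply]

theorem graphEntropy_le {x : V → ℝ} (hx : x ∈ STAB G) (hpos : ∀ v, 0 < x v) :
    graphEntropy G ≤ -(1 / (Fintype.card V : ℝ)) * ∑ v, logb 2 (x v) := by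
  refine csInf_le ⟨0, ?_⟩ ⟨x, hx, hpos, rfl⟩
  rintro _ ⟨y, hy, hypos, rfl⟩
  have : ∑ v, logb 2 (y v) ≤ 0 :=
    sum_nonpos fun v _ => logb_nonpos one_lt_two (hypos v).le (le_one_of_mem_STAB hy v)
  have : 0 ≤ 1 / (Fintype.card V : ℝ) := by positivity
  nlinarith

theorem le_graphEntropy [Nonempty V] {c : ℝ}
    (h : ∀ x ∈ STAB G, (∀ v, 0 < x v) → c ≤ -(1 / (Fintype.card V : ℝ)) * ∑ v, logb 2 (x v)) :
    c ≤ graphEntropy G := by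
  refine le_csInf ⟨_, _, const_mem_STAB G, fun _ => by positivity, rfl⟩ ?_
  rintro _ ⟨x, hx, hpos, rfl⟩
  exact h x hx hpos

end StablePolytope

theorem sum_logb_le_of_sum_le_one {ι : Type*} [Fintype ι] {y : ι → ℝ} (hy : ∀ i, 0 < y i)
    (hsum : ∑ i, y i ≤ 1) :
    ∑ i, logb 2 (y i) ≤ -(Fintype.card ι : ℝ) * logb 2 (Fintype.card ι) := by
  set n : ℝ := (Fintype.card ι : ℝ)
  have hpoint : ∀ i, log n + log (y i) ≤ n * y i - 1 := fun i => by
    have hn : 0 < n := by have := Fintype.card_pos_iff.mpr ⟨i⟩; positivity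
    rw [← log_mul hn.ne' (hy i).ne']
    exact log_le_sub_one_of_pos (by have := hy i; positivity)
  have hlog : ∑ i, log (y i) ≤ -n * log n := by
    have := sum_le_sum fun i (_ : i ∈ univ) => hpoint i
    simp only [sum_add_distrib, sum_sub_distrib, sum_const, card_univ, nsmul_eq_mul, ← mul_sum,
      mul_one] at this
    nlinarith [(Nat.cast_nonneg (Fintype.card ι) : (0 : ℝ) ≤ n)]
  simp only [logb, ← sum_div, mul_div_assoc']
  gcongr

theorem add_mul_log_add_le {a b c : ℝ} (ha : 0 ≤ a) (hb : 0 ≤ b) (hc : a + b ≤ c) :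
    (a + b) * log (a + b) ≤ a * log a + b * log c + b := by
  rcases ha.eq_or_lt with rfl | ha
  · rcases hb.eq_or_lt with rfl | hb
    · simp
    · simp only [zero_add, zero_mul]
      nlinarith [log_le_log hb (zero_add b ▸ hc)]
  · have hshift : log (a + b) ≤ log a + b / a := by
      have := log_le_sub_one_of_pos (div_pos (by positivity : 0 < a + b) ha)
      rw [log_div (by positivity) ha.ne', add_div, div_self ha.ne'] at this
      linarith
    have hc' : b * log (a + b) ≤ b * log c := mul_le_mul_of_nonneg_left
      (log_le_log (by positivity) hc) hb
    have : a * (b / a) = b := by field_simp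
    nlinarith [mul_le_mul_of_nonneg_left hshift ha.le]

section CompleteMultipartite

variable {V ι : Type*} [Fintype V] [DecidableEq ι] {f : V → ι}

theorem sum_logb_card_fiber_le [Fintype ι] {B : V → ℝ}
    (hB : ∀ i, #{v | f v = i} * logb 2 #{v | f v = i} ≤ ∑ v with f v = i, B v) :
    ∑ v, logb 2 #{w | f w = f v} ≤ ∑ v, B v := by
  rw [← sum_fiberwise univ f, ← sum_fiberwise univ f B]
  refine sum_le_sum fun i _ => ?_
  rw [sum_congr rfl fun v hv => by rw [(mem_filter.mp hv).2], sum_const, nsmul_eq_mul]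
  exact hB i

variable [DecidableEq V] {G : SimpleGraph V}

theorem sum_inv_card_fiber_mul_le_one (hf : ∀ v w, f v ≠ f w → G.Adj v w) {x : V → ℝ}
    (hx : x ∈ STAB G) : ∑ v, (#{w | f w = f v} : ℝ)⁻¹ * x v ≤ 1 := by
  refine sum_mul_le_one_of_mem_STAB (fun S hS => ?_) hx
  obtain rfl | ⟨v₀, hv₀⟩ := S.eq_empty_or_nonempty
  · simp
  have hfiber : ∀ v ∈ S, f v = f v₀ := fun v hv => by
    by_contra hne
    exact hS v hv v₀ hv₀ (hf v v₀ hne)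
  have hsub : S ⊆ ({w | f w = f v₀} : Finset V) := fun v hv => by simpa using hfiber v hv
  have hpos : (0 : ℝ) < #{w | f w = f v₀} := by
    exact_mod_cast card_pos.mpr ⟨v₀, by simp⟩
  rw [sum_congr rfl fun v hv => by rw [hfiber v hv], sum_const, nsmul_eq_mul, ← div_eq_mul_inv,
    div_le_one hpos]
  exact_mod_cast card_le_card hsub

theorem sum_logb_le_sum_logb_card_fiber (hf : ∀ v w, f v ≠ f w → G.Adj v w) {x : V → ℝ}
    (hx : x ∈ STAB G) (hpos : ∀ v, 0 < x v) :
    ∑ v, logb 2 (x v) ≤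
      ∑ v, logb 2 #{w | f w = f v} - Fintype.card V * logb 2 (Fintype.card V) := by
  have hcard : ∀ v, (0 : ℝ) < #{w | f w = f v} := fun v => by
    exact_mod_cast card_pos.mpr ⟨v, by simp⟩
  have := sum_logb_le_of_sum_le_one (fun v => mul_pos (inv_pos.mpr (hcard v)) (hpos v))
    (sum_inv_card_fiber_mul_le_one hf hx)
  simp only [logb_mul (inv_pos.mpr (hcard _)).ne' (hpos _).ne', logb_inv, sum_add_distrib,
    sum_neg_distrib] at this
  linarith

theorem le_graphEntropy_of_adj_of_ne [Nonempty V] [Fintype ι]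
    (hf : ∀ v w, f v ≠ f w → G.Adj v w) {B : V → ℝ}
    (hB : ∀ i, #{v | f v = i} * logb 2 #{v | f v = i} ≤ ∑ v with f v = i, B v) :
    logb 2 (Fintype.card V) - (∑ v, B v) / Fintype.card V ≤ graphEntropy G := by
  refine le_graphEntropy fun x hx hpos => ?_
  have hn : (0 : ℝ) < Fintype.card V := by exact_mod_cast Fintype.card_pos
  have h := (sum_logb_le_sum_logb_card_fiber hf hx hpos).trans
    (sub_le_sub_right (sum_logb_card_fiber_le hB) _)
  rw [sub_le_iff_le_add, neg_mul, one_div_mul_eq_div, neg_add_eq_sub, div_sub_div_same,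
    le_div_iff₀ hn]
  linarith

end CompleteMultipartite

section PartialOrders

variable {V : Type*} {P W : PartialOrder V}

theorem IsWeakOrder.exists_rank (hW : IsWeakOrder W) :
    ∃ (m : ℕ) (r : V → Fin m), ∀ v w, W.lt v w ↔ r v < r w := by
  obtain ⟨m, A, hA, hlt⟩ := hW
  choose r hr huniq using hA
  refine ⟨m, r, fun v w => (hlt v w).trans ⟨?_, fun h => ⟨r v, r w, h, hr v, hr w⟩⟩⟩
  rintro ⟨i, j, hij, hi, hj⟩
  rwa [← huniq v i hi, ← huniq w j hj]

theorem compGraph_adj_of_lt {v w : V} (h : P.lt v w) : (compGraph P).Adj v w :=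
  letI := P
  ⟨ne_of_lt h, Or.inl h.le⟩

theorem Extends.lt {v w : V} (hext : Extends W P) (h : P.lt v w) : W.lt v w :=
  letI := P
  (@lt_iff_le_and_ne V W v w).mpr ⟨hext v w h.le, ne_of_lt h⟩

end PartialOrders

namespace IkType

theorem sum_succ {M : Type*} [AddCommMonoid M] (k : ℕ) (f : IkType (k + 1) → M) :
    ∑ v, f v = ∑ a : IkType k, f (.inl a) + (∑ i : Fin (2 ^ k), f (.inr (.inl i)) +
      (∑ i : Fin (2 ^ k), f (.inr (.inr (.inl i))) + ∑ a : IkType k, f (.inr (.inr (.inr a))))) :=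
  (Fintype.sum_sum_type f).trans
    (congrArg _ ((Fintype.sum_sum_type _).trans (congrArg _ (Fintype.sum_sum_type _))))

theorem card : ∀ k, Fintype.card (IkType k) = (k + 1) * 2 ^ k
  | 0 => rfl
  | k + 1 => by
    rw [← Finset.card_univ, card_eq_sum_ones, sum_succ]
    simp only [sum_const, card_univ, card k, smul_eq_mul, mul_one, Fintype.card_fin]
    ring

instance (k : ℕ) : Nonempty (IkType k) :=
  Fintype.card_pos_iff.mp (by rw [IkType.card]; positivity)

variable {k : ℕ} {L R : Finset (IkType k)} {B C : Finset (Fin (2 ^ k))}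

/-- The finset of `IkType (k + 1)` with parts `L`, `B ⊆ A_L`, `C ⊆ A_R` and `R`. -/
def glue (L : Finset (IkType k)) (B C : Finset (Fin (2 ^ k))) (R : Finset (IkType k)) :
    Finset (IkType (k + 1)) :=
  L.disjSum (B.disjSum (C.disjSum R))

/- Stated at `IkType (k + 1)` rather than at its unfolding, which is what
`(.inl a : IkType (k + 1)) ∈ glue L B C R` elaborates to: only this form rewrites the memberships
produced by case splits on `IkType (k + 1)`. -/

@[simp]
theorem inl_mem_glue {a : IkType k} :
    @Membership.mem (IkType (k + 1)) _ _ (glue L B C R) (.inl a) ↔ a ∈ L :=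
  inl_mem_disjSum

@[simp]
theorem inr_inl_mem_glue {i : Fin (2 ^ k)} :
    @Membership.mem (IkType (k + 1)) _ _ (glue L B C R) (.inr (.inl i)) ↔ i ∈ B :=
  inr_mem_disjSum.trans inl_mem_disjSum

@[simp]
theorem inr_inr_inl_mem_glue {i : Fin (2 ^ k)} :
    @Membership.mem (IkType (k + 1)) _ _ (glue L B C R) (.inr (.inr (.inl i))) ↔ i ∈ C :=
  inr_mem_disjSum.trans (inr_mem_disjSum.trans inl_mem_disjSum)

@[simp]
theorem inr_inr_inr_mem_glue {a : IkType k} :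
    @Membership.mem (IkType (k + 1)) _ _ (glue L B C R) (.inr (.inr (.inr a))) ↔ a ∈ R :=
  inr_mem_disjSum.trans (inr_mem_disjSum.trans inr_mem_disjSum)

theorem sum_glue {M : Type*} [AddCommMonoid M] (f : IkType (k + 1) → M) :
    ∑ v ∈ glue L B C R, f v = ∑ a ∈ L, f (.inl a) + (∑ i ∈ B, f (.inr (.inl i)) +
      (∑ i ∈ C, f (.inr (.inr (.inl i))) + ∑ a ∈ R, f (.inr (.inr (.inr a))))) :=
  (sum_disjSum _ _ f).trans (by rw [sum_disjSum, sum_disjSum])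

theorem card_glue : #(glue L B C R) = #L + (#B + (#C + #R)) := by
  simp only [card_eq_sum_ones, sum_glue]

theorem exists_eq_glue (S : Finset (IkType (k + 1))) :
    ∃ (L R : Finset (IkType k)) (B C : Finset (Fin (2 ^ k))), S = glue L B C R := by
  refine ⟨S.toLeft, S.toRight.toRight.toRight, S.toRight.toLeft, S.toRight.toRight.toLeft, ?_⟩
  simp only [glue, toLeft_disjSum_toRight]
  exact toLeft_disjSum_toRight.symm

end IkType

/-- `ikLevel k v = j` when `v` lies in the central antichain of a copy of `I_{j+1}` inside
`I_{k+1}`, the one-element copies `I_1` counting as their own central antichain. -/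
def ikLevel : (k : ℕ) → IkType k → ℕ
  | 0, _ => 0
  | k + 1, .inl a => ikLevel k a
  | k + 1, .inr (.inl _) => k + 1
  | k + 1, .inr (.inr (.inl _)) => k + 1
  | k + 1, .inr (.inr (.inr a)) => ikLevel k a

theorem sum_ikLevel : ∀ k, 2 * ∑ v : IkType k, ikLevel k v = k * (k + 1) * 2 ^ k
  | 0 => rfl
  | k + 1 => by
    have ih := sum_ikLevel k
    simp only [IkType.sum_succ, ikLevel, sum_const, card_univ, Fintype.card_fin, smul_eq_mul]
    rw [pow_succ]
    nlinarith

def IkAntichain (k : ℕ) (S : Finset (IkType k)) : Prop :=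
  ∀ v ∈ S, ∀ w ∈ S, ¬ IkLT k v w

theorem ikOrder_lt_of_ikLT {k : ℕ} {v w : IkType k} (h : IkLT k v w) : (IkOrder k).lt v w :=
  (@lt_iff_le_and_ne _ (IkOrder k) v w).mpr ⟨Or.inl h, fun hvw => ikLT_irrefl k v (hvw ▸ h)⟩

theorem isStableSet_compGraph_ikOrder_iff {k : ℕ} {S : Finset (IkType k)} :
    IsStableSet (compGraph (IkOrder k)) S ↔ IkAntichain k S := by
  refine ⟨fun h v hv w hw hlt => h v hv w hw ⟨?_, Or.inl (Or.inl hlt)⟩, ?_⟩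
  · rintro rfl
    exact ikLT_irrefl k v hlt
  · rintro h v hv w hw ⟨hne, (hvw | rfl) | (hwv | rfl)⟩
    exacts [h v hv w hw hvw, hne rfl, h w hw v hv hwv, hne rfl]

namespace IkAntichain

variable {k : ℕ} {L R : Finset (IkType k)} {B C : Finset (Fin (2 ^ k))}

theorem of_glue (h : IkAntichain (k + 1) (IkType.glue L B C R)) :
    IkAntichain k L ∧ IkAntichain k R ∧ (#L = 0 ∨ #C = 0 ∧ #R = 0) ∧ (#R = 0 ∨ #B = 0) := by
  refine ⟨fun a ha b hb => h (.inl a) (by simpa) (.inl b) (by simpa),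
    fun a ha b hb => h (.inr (.inr (.inr a))) (by simpa) (.inr (.inr (.inr b))) (by simpa), ?_, ?_⟩
  · refine L.eq_empty_or_nonempty.imp (fun hL => by simp [hL]) fun ⟨a, ha⟩ => ?_
    simp only [card_eq_zero, eq_empty_iff_forall_notMem]
    exact ⟨fun i hi => h (.inl a) (by simpa) (.inr (.inr (.inl i))) (by simpa) trivial,
      fun b hb => h (.inl a) (by simpa) (.inr (.inr (.inr b))) (by simpa) trivial⟩
  · refine R.eq_empty_or_nonempty.imp (fun hR => by simp [hR]) fun ⟨a, ha⟩ => ?_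
    simp only [card_eq_zero, eq_empty_iff_forall_notMem]
    exact fun i hi => h (.inr (.inl i)) (by simpa) (.inr (.inr (.inr a))) (by simpa) trivial

theorem card_le : ∀ {k : ℕ} {S : Finset (IkType k)}, IkAntichain k S → #S ≤ 2 ^ k
  | 0, S, _ => card_le_univ S
  | k + 1, S, hS => by
    obtain ⟨L, R, B, C, rfl⟩ := IkType.exists_eq_glue S
    obtain ⟨hL, hR, hLCR, hRB⟩ := hS.of_glue
    have := hL.card_le
    have := hR.card_le
    have := card_le_univ B
    have := card_le_univ C
    simp only [IkType.card_glue, Fintype.card_fin, pow_succ] at *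
    omega

/- An antichain of `I_{k+2}` meets at most one of the copies `L`, `R`, its central part has level
`k + 1`, and it has at most `2^(k+1)` elements: combine the bound for the copy with
`add_mul_log_add_le`. -/
theorem card_mul_log_card_le : ∀ {k : ℕ} {S : Finset (IkType k)}, IkAntichain k S →
    (#S : ℝ) * log #S ≤ log 2 * ∑ v ∈ S, (ikLevel k v : ℝ) + #S
  | 0, S, _ => by
    have hS : #S = 0 ∨ #S = 1 := by have := card_le_univ S; change _ ≤ 1 at this; omega
    have : (0 : ℝ) ≤ log 2 * ∑ v ∈ S, (ikLevel 0 v : ℝ) := by positivity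
    rcases hS with h | h <;> simp [h] <;> linarith
  | k + 1, S, hS => by
    have hcard := hS.card_le
    obtain ⟨L, R, B, C, rfl⟩ := IkType.exists_eq_glue S
    obtain ⟨hL, hR, hLCR, -⟩ := hS.of_glue
    have ihL := hL.card_mul_log_card_le
    have ihR := hR.card_mul_log_card_le
    have hLR : ((#L + #R : ℕ) : ℝ) * log (#L + #R : ℕ) = #L * log #L + #R * log #R := by
      rcases hLCR with h | ⟨-, h⟩ <;> simp only [h, zero_add, add_zero, Nat.cast_zero, zero_mul]
    rw [IkType.card_glue] at hcard
    have hsize : ((#L + #R : ℕ) : ℝ) + (#B + #C : ℕ) ≤ 2 ^ (k + 1) := by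
      exact_mod_cast (by omega : #L + #R + (#B + #C) ≤ 2 ^ (k + 1))
    have key := add_mul_log_add_le (Nat.cast_nonneg _) (Nat.cast_nonneg _) hsize
    rw [hLR, log_pow] at key
    simp only [IkType.card_glue, IkType.sum_glue, ikLevel, sum_const, nsmul_eq_mul]
    push_cast at key ⊢
    rw [show (#L + #R + (#B + #C) : ℝ) = #L + (#B + (#C + #R)) by ring] at key
    nlinarith

theorem card_mul_logb_card_le {S : Finset (IkType k)} (hS : IkAntichain k S) :
    (#S : ℝ) * logb 2 #S ≤ ∑ v ∈ S, ((ikLevel k v : ℝ) + logb 2 (exp 1)) := by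
  have hlog2 : 0 < log 2 := log_pos one_lt_two
  have h := hS.card_mul_log_card_le
  rw [sum_add_distrib, sum_const, nsmul_eq_mul, logb, logb, log_exp, ← sub_nonneg]
  have : ∑ v ∈ S, (ikLevel k v : ℝ) + #S * (1 / log 2) - #S * (log #S / log 2) =
      (log 2 * ∑ v ∈ S, (ikLevel k v : ℝ) + #S - #S * log #S) / log 2 := by
    field_simp
  rw [this]
  exact div_nonneg (by linarith) hlog2.le

end IkAntichain

/-- The average of the two lifts of `z`: to `L ∪ A_L` (by `z` on `L` and `1` on `A_L`) and to
`A_R ∪ R`. -/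
noncomputable def ikLift {k : ℕ} (z : IkType k → ℝ) : IkType (k + 1) → ℝ
  | .inl a => z a / 2
  | .inr (.inl _) => 1 / 2
  | .inr (.inr (.inl _)) => 1 / 2
  | .inr (.inr (.inr a)) => z a / 2

theorem ikLift_smul_add_smul {k : ℕ} {y z : IkType k → ℝ} {a b : ℝ} (hab : a + b = 1) :
    ikLift (a • y + b • z) = a • ikLift y + b • ikLift z := by
  funext v
  simp only [Pi.add_apply, Pi.smul_apply, smul_eq_mul]
  rcases v with v | v | v | v <;> simp only [ikLift, Pi.add_apply, Pi.smul_apply, smul_eq_mul]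
  exacts [by ring, by linear_combination (-1 / 2 : ℝ) * hab,
    by linear_combination (-1 / 2 : ℝ) * hab, by ring]

theorem ikLift_mem_STAB {k : ℕ} {z : IkType k → ℝ} (hz : z ∈ STAB (compGraph (IkOrder k))) :
    ikLift z ∈ STAB (compGraph (IkOrder (k + 1))) := by
  refine convexHull_min (t := {z | ikLift z ∈ STAB (compGraph (IkOrder (k + 1)))}) ?_ ?_ hz
  · rintro _ ⟨S, hS, rfl⟩
    rw [isStableSet_compGraph_ikOrder_iff] at hS
    have hTL : IkAntichain (k + 1) (IkType.glue S univ ∅ ∅) := by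
      rintro (a | i | i | a) ha (b | j | j | b) hb hab <;> simp_all [IkLT]
      exact hS a ha b hb hab
    have hTR : IkAntichain (k + 1) (IkType.glue ∅ ∅ univ S) := by
      rintro (a | i | i | a) ha (b | j | j | b) hb hab <;> simp_all [IkLT]
      exact hS a ha b hb hab
    have hmem : ∀ T : Finset (IkType (k + 1)), IkAntichain (k + 1) T →
        (fun v => if v ∈ T then (1 : ℝ) else 0) ∈ STAB (compGraph (IkOrder (k + 1))) :=
      fun T hT => subset_convexHull ℝ _ ⟨T, isStableSet_compGraph_ikOrder_iff.mpr hT, rfl⟩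
    have hsplit : ikLift (fun v => if v ∈ S then (1 : ℝ) else 0) =
        (1 / 2 : ℝ) • (fun v => if v ∈ IkType.glue S univ ∅ ∅ then (1 : ℝ) else 0) +
        (1 / 2 : ℝ) • (fun v => if v ∈ IkType.glue ∅ ∅ univ S then (1 : ℝ) else 0) := by
      funext v
      simp only [Pi.add_apply, Pi.smul_apply, smul_eq_mul]
      rcases v with a | i | i | a <;> simp [ikLift] <;> split_ifs <;> norm_num
    rw [Set.mem_ofPred_eq, hsplit]
    exact convex_convexHull ℝ _ (hmem _ hTL) (hmem _ hTR) (by norm_num) (by norm_num)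
      (by norm_num)
  · intro y hy z hz a b ha hb hab
    rw [Set.mem_ofPred_eq, ikLift_smul_add_smul hab]
    exact convex_convexHull ℝ _ hy hz ha hb hab

noncomputable def ikPoint : (k : ℕ) → IkType k → ℝ
  | 0 => fun _ => 1
  | k + 1 => ikLift (ikPoint k)

theorem ikPoint_mem_STAB : ∀ k, ikPoint k ∈ STAB (compGraph (IkOrder k))
  | 0 => subset_convexHull ℝ _ ⟨univ, fun v _ w _ hvw => hvw.1 rfl, by funext; simp [ikPoint]⟩
  | k + 1 => ikLift_mem_STAB (ikPoint_mem_STAB k)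

theorem ikPoint_pos : ∀ k v, 0 < ikPoint k v
  | 0, _ => one_pos
  | k + 1, v => by
    rcases v with a | i | i | a <;> simp [ikPoint, ikLift, ikPoint_pos k]

theorem sum_logb_ikPoint : ∀ k, 2 * ∑ v, logb 2 (ikPoint k v) = -(k * (k + 3) * 2 ^ k)
  | 0 => by simp [ikPoint]
  | k + 1 => by
    have ih := sum_logb_ikPoint k
    have hhalf : ∀ a, logb 2 (ikPoint k a / 2) = logb 2 (ikPoint k a) - 1 := fun a => by
      rw [logb_div (ikPoint_pos k a).ne' two_ne_zero, logb_self_eq_one one_lt_two]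
    simp only [IkType.sum_succ, ikPoint, ikLift, hhalf, sum_sub_distrib, sum_const, card_univ,
      IkType.card, Fintype.card_fin, one_div, logb_inv, logb_self_eq_one one_lt_two, nsmul_eq_mul]
    push_cast
    rw [pow_succ]
    linear_combination 2 * ih

theorem posetEntropy_ikOrder_le (k : ℕ) : posetEntropy (IkOrder k) ≤ k / 2 + 1 := by
  refine (graphEntropy_le (ikPoint_mem_STAB k) (ikPoint_pos k)).trans ?_
  have h := sum_logb_ikPoint k
  have hpow : (0 : ℝ) < 2 ^ k := by positivity
  rw [IkType.card, Nat.cast_mul, Nat.cast_pow, Nat.cast_two, neg_mul, one_div_mul_eq_div,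
    neg_le, le_div_iff₀ (by positivity)]
  push_cast
  nlinarith

theorem le_posetEntropy_of_isWeakOrder_of_extends {k : ℕ} {W : PartialOrder (IkType k)}
    (hW : IsWeakOrder W) (hext : Extends W (IkOrder k)) :
    logb 2 (k + 1) + k / 2 - logb 2 (exp 1) ≤ posetEntropy W := by
  obtain ⟨m, r, hr⟩ := hW.exists_rank
  have hadj : ∀ v w, r v ≠ r w → (compGraph W).Adj v w := fun v w hne =>
    hne.lt_or_gt.elim (fun h => compGraph_adj_of_lt ((hr v w).mpr h))
      fun h => (compGraph_adj_of_lt ((hr w v).mpr h)).symm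
  have hfiber : ∀ i, IkAntichain k {v | r v = i} := fun i v hv w hw hlt => by
    have := (hr v w).mp (hext.lt (ikOrder_lt_of_ikLT hlt))
    simp only [mem_filter, mem_univ, true_and] at hv hw
    exact this.ne (hv.trans hw.symm)
  have hsum : 2 * ∑ v : IkType k, (ikLevel k v : ℝ) = k * (k + 1) * 2 ^ k := by
    exact_mod_cast sum_ikLevel k
  have := le_graphEntropy_of_adj_of_ne hadj fun i => (hfiber i).card_mul_logb_card_le
  rw [sum_add_distrib, sum_const, card_univ, nsmul_eq_mul, IkType.card] at this
  push_cast at this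
  rw [logb_mul (by positivity) (by positivity), logb_pow, logb_self_eq_one one_lt_two] at this
  have hpow : (0 : ℝ) < 2 ^ k := by positivity
  have hmean : (∑ v : IkType k, (ikLevel k v : ℝ) + (k + 1) * 2 ^ k * logb 2 (exp 1)) /
      ((k + 1) * 2 ^ k) = k / 2 + logb 2 (exp 1) := by
    field_simp
    linear_combination hsum
  unfold posetEntropy
  linarith

/-- For every `k ≥ 1`, every weak order `W` extending the interval order `I_k`
satisfies `H(W) - H(I_k) ≥ log₂ k - log₂ e - 1`. (Here `IkOrder k` is `I_{k+1}`,
so the bound reads `H(W) - H(I_{k+1}) ≥ log₂ (k+1) - log₂ e - 1`.) -/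
theorem weakOrder_extension_Ik_entropy_gap (k : ℕ)
    (W : PartialOrder (IkType k)) (hW : IsWeakOrder W)
    (hext : Extends W (IkOrder k)) :
    Real.logb 2 ((k : ℝ) + 1) - Real.logb 2 (Real.exp 1) - 1 ≤
      posetEntropy W - posetEntropy (IkOrder k) := by
  have hW := le_posetEntropy_of_isWeakOrder_of_extends hW hext
  have hI := posetEntropy_ikOrder_le k
  linarith
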